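/- arXiv:2211.05726 — 2 statements merged into one kernel-verified Lean document; each statement's English description precedes it below -/
import Mathlib

section
/- For any r ≥ 3 and any connected r-regular graph G, λ(G) ≥ (r-2)·φ(G) + 2, where λ(G) is the maximum number of leaves and φ(G) the maximum number of full degree vertices over all spanning trees of G. -/
open SimpleGraph

/-- Degree of `v` in `T` (as `Set.ncard` of the neighbor set). -/
noncomputable def deg {V : Type*} (T : SimpleGraph V) (v : V) : ℕ :=
  (T.neighborSet v).ncard

/-- `T` is a spanning tree of `G`. -/
def IsSpanningTree {V : Type*} (G T : SimpleGraph V) : Prop :=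
  T ≤ G ∧ T.IsTree

/-- Number of full degree vertices of the spanning tree `T` of `G`. -/
noncomputable def fullDegCount {V : Type*} (G T : SimpleGraph V) : ℕ :=
  {v : V | deg T v = deg G v}.ncard

/-- Number of leaves of `T`. -/
noncomputable def leafCount {V : Type*} (T : SimpleGraph V) : ℕ :=
  {v : V | deg T v = 1}.ncard

/-- `φ(G)`: maximum number of full degree vertices over all spanning trees. -/
noncomputable def phi {V : Type*} (G : SimpleGraph V) : ℕ :=
  sSup {k | ∃ T : SimpleGraph V, IsSpanningTree G T ∧ fullDegCount G T = k}

/-- `λ(G)`: maximum number of leaves over all spanning trees. -/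
noncomputable def lam {V : Type*} (G : SimpleGraph V) : ℕ :=
  sSup {k | ∃ T : SimpleGraph V, IsSpanningTree G T ∧ leafCount T = k}

/-- `S` is a connected dominating set of `G`. -/
def IsConnDomSet {V : Type*} (G : SimpleGraph V) (S : Set V) : Prop :=
  (G.induce S).Connected ∧ ∀ v : V, v ∈ S ∨ ∃ u ∈ S, G.Adj u v

/-- `γ_C(G)`: minimum size of a connected dominating set. -/
noncomputable def gammaC {V : Type*} (G : SimpleGraph V) : ℕ :=
  sInf {k | ∃ S : Set V, IsConnDomSet G S ∧ S.ncard = k}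

/-- Closed neighborhood of `v` in `G`. -/
def closedNbhd {V : Type*} (G : SimpleGraph V) (v : V) : Set V :=
  insert v (G.neighborSet v)

/-- The square of a graph: join vertices at distance at most 2. -/
def square {V : Type*} (G : SimpleGraph V) : SimpleGraph V where
  Adj u v := u ≠ v ∧ G.Reachable u v ∧ G.dist u v ≤ 2
  symm := by
    constructor
    rintro u v ⟨h1, h2, h3⟩
    exact ⟨h1.symm, h2.symm, by rwa [SimpleGraph.dist_comm]⟩
  loopless := by constructor; rintro v ⟨h, -⟩; exact h rfl

/-!
A tree on `n ≥ 2` vertices has degree sum `2n - 2` and no isolated vertex, so summing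
`2 + (r - 2)·[deg v = r] ≤ deg v + [deg v = 1]` over all vertices gives
`(r - 2)·#{deg = r} + 2 ≤ #leaves`. In an `r`-regular graph the vertices of tree degree `r` are
exactly the full degree vertices, and the bound applied to a tree attaining `φ(G)` gives the theorem.
-/

open Finset

namespace SimpleGraph

variable {V : Type*} [Fintype V] {T : SimpleGraph V} [DecidableRel T.Adj]

theorem IsTree.sum_degree_add_two (hT : T.IsTree) :
    ∑ v, T.degree v + 2 = 2 * Fintype.card V := by
  have := hT.card_edgeFinset
  rw [sum_degrees_eq_twice_card_edges]
  omega

theorem IsTree.card_degree_eq_one_ge [Nontrivial V] (hT : T.IsTree) (r : ℕ) :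
    (r - 2) * #{v | T.degree v = r} + 2 ≤ #{v | T.degree v = 1} := by
  have hpoint (v : V) : 2 + (if T.degree v = r then r - 2 else 0) ≤
      T.degree v + (if T.degree v = 1 then 1 else 0) := by
    have := hT.connected.preconnected.degree_pos_of_nontrivial v
    split_ifs <;> omega
  have hsum := sum_le_sum fun v (_ : v ∈ univ) => hpoint v
  simp only [sum_add_distrib, sum_ite, sum_const, smul_eq_mul, mul_one, card_univ] at hsum
  have := hT.sum_degree_add_two
  linarith

end SimpleGraph

section SpanningTrees

variable {V : Type*} [Fintype V] {G T : SimpleGraph V}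

theorem deg_eq_degree (T : SimpleGraph V) [DecidableRel T.Adj] (v : V) : deg T v = T.degree v := by
  rw [deg, ← card_neighborFinset_eq_degree, Set.ncard_eq_toFinset_card']
  rfl

theorem fullDegCount_eq_card_degree_eq [DecidableRel T.Adj] {r : ℕ} (hreg : ∀ v, deg G v = r) :
    fullDegCount G T = #{v | T.degree v = r} := by
  simp only [fullDegCount, hreg, deg_eq_degree, Set.ncard_eq_toFinset_card', Set.toFinset_ofPred]

theorem leafCount_eq_card_degree_eq_one [DecidableRel T.Adj] :
    leafCount T = #{v | T.degree v = 1} := by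
  simp only [leafCount, deg_eq_degree, Set.ncard_eq_toFinset_card', Set.toFinset_ofPred]

theorem bddAbove_spanningTree_ncard (G : SimpleGraph V) (S : SimpleGraph V → Set V) :
    BddAbove {k | ∃ T, IsSpanningTree G T ∧ (S T).ncard = k} :=
  ⟨Nat.card V, by rintro _ ⟨T, -, rfl⟩; exact Set.ncard_le_card _⟩

theorem exists_isSpanningTree_fullDegCount_eq_phi (hG : G.Connected) :
    ∃ T, IsSpanningTree G T ∧ fullDegCount G T = phi G := by
  obtain ⟨T, hTG, hT⟩ := hG.exists_isTree_le
  exact Nat.sSup_mem (s := {k | ∃ T, IsSpanningTree G T ∧ fullDegCount G T = k})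
    ⟨_, T, ⟨hTG, hT⟩, rfl⟩ (bddAbove_spanningTree_ncard G fun T => {v | deg T v = deg G v})

theorem leafCount_le_lam (hT : IsSpanningTree G T) : leafCount T ≤ lam G :=
  le_csSup (bddAbove_spanningTree_ncard G fun T => {v | deg T v = 1}) ⟨T, hT, rfl⟩

omit [Fintype V] in
theorem nontrivial_of_deg_ne_zero {v : V} (hv : deg G v ≠ 0) : Nontrivial V := by
  obtain ⟨w, hw⟩ := Set.nonempty_of_ncard_ne_zero hv
  exact ⟨v, w, hw.ne⟩

end SpanningTrees

theorem stmt10 {V : Type*} [Fintype V] (G : SimpleGraph V) (r : ℕ)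
    (hr : 3 ≤ r) (hG : G.Connected) (hreg : ∀ v : V, deg G v = r) :
    (r - 2) * phi G + 2 ≤ lam G := by
  classical
  obtain ⟨v⟩ := hG.nonempty
  have : Nontrivial V := nontrivial_of_deg_ne_zero (v := v) (by rw [hreg v]; omega)
  obtain ⟨T, hT, hTphi⟩ := exists_isSpanningTree_fullDegCount_eq_phi hG
  calc (r - 2) * phi G + 2 = (r - 2) * #{v | T.degree v = r} + 2 := by
        rw [← hTphi, fullDegCount_eq_card_degree_eq hreg]
    _ ≤ #{v | T.degree v = 1} := hT.2.card_degree_eq_one_ge r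
    _ = leafCount T := leafCount_eq_card_degree_eq_one.symm
    _ ≤ lam G := leafCount_le_lam hT
end

section
/- For any connected r-regular graph G on n vertices (r ≥ 2), φ(G) ≤ n/(r-1), where φ(G) is the maximum number of full degree vertices in a spanning tree. -/
open SimpleGraph

/-! A spanning tree on `n` vertices has degree sum `2(n - 1)`. Each of its `k` full degree vertices
contributes `r` and every other vertex at least `1`, so `r k + (n - k) ≤ 2(n - 1)`, that is
`(r - 1) k ≤ n - 2`. -/

lemma deg_eq_degree_s12 {V : Type*} (G : SimpleGraph V) (v : V) [Fintype (G.neighborSet v)] :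
    deg G v = G.degree v := by
  rw [deg, Set.ncard_eq_toFinset_card', ← card_neighborFinset_eq_degree]
  rfl

lemma fullDegCount_mul_pred_le_card {V : Type*} [Fintype V] {G T : SimpleGraph V} {r : ℕ}
    (hT : T.IsTree) (hcard : 2 ≤ Fintype.card V) (hreg : ∀ v, deg G v = r) :
    fullDegCount G T * (r - 1) ≤ Fintype.card V := by
  classical
  have : Nontrivial V := Fintype.one_lt_card_iff_nontrivial.mp hcard
  set full := Finset.univ.filter fun v => deg T v = deg G v
  have hcount : fullDegCount G T = full.card := by
    rw [fullDegCount, Set.ncard_eq_toFinset_card']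
    congr 1
    ext v
    simp [full]
  have hsum : ∑ v, T.degree v = 2 * (Fintype.card V - 1) := by
    rw [sum_degrees_eq_twice_card_edges, ← hT.card_edgeFinset, Nat.add_sub_cancel]
  have hlower : r * full.card + (Fintype.card V - full.card) ≤ ∑ v, T.degree v := by
    rw [← Finset.sum_filter_add_sum_filter_not Finset.univ fun v => deg T v = deg G v]
    gcongr
    · rw [mul_comm, ← smul_eq_mul, ← Finset.sum_const]
      refine Finset.sum_le_sum fun v hv => ?_
      rw [← deg_eq_degree_s12, (Finset.mem_filter.mp hv).2, hreg]
    · rw [Finset.filter_not, ← Finset.card_univ_sdiff, Finset.card_eq_sum_ones]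
      refine Finset.sum_le_sum fun v _ => ?_
      exact hT.connected.preconnected.degree_pos_of_nontrivial v
  have hle : full.card ≤ Fintype.card V := Finset.card_le_univ full
  rw [hcount, Nat.mul_sub, mul_one, mul_comm]
  omega

lemma phi_le_of_forall_fullDegCount_le {V : Type*} {G : SimpleGraph V} {m : ℕ}
    (h : ∀ T, IsSpanningTree G T → fullDegCount G T ≤ m) : phi G ≤ m :=
  csSup_le' fun _ ⟨T, hT, hk⟩ => hk ▸ h T hT

theorem stmt12_general {V : Type*} [Fintype V] (G : SimpleGraph V) (n r : ℕ)
    (hn : n = Fintype.card V) (hn2 : 2 ≤ n) (hr : 2 ≤ r)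
    (hreg : ∀ v : V, deg G v = r) :
    (phi G : ℝ) ≤ (n : ℝ) / (r - 1) := by
  have hphi : phi G ≤ n / (r - 1) := phi_le_of_forall_fullDegCount_le fun T hT =>
    (Nat.le_div_iff_mul_le (by omega)).mpr
      (hn ▸ fullDegCount_mul_pred_le_card hT.2 (hn ▸ hn2) hreg)
  calc (phi G : ℝ) ≤ ((n / (r - 1) : ℕ) : ℝ) := by exact_mod_cast hphi
    _ ≤ (n : ℝ) / ((r - 1 : ℕ) : ℝ) := Nat.cast_div_le
    _ = (n : ℝ) / (r - 1) := by rw [Nat.cast_sub (by omega), Nat.cast_one]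

theorem stmt12 {V : Type*} [Fintype V] (G : SimpleGraph V) (n r : ℕ)
    (hn : n = Fintype.card V) (hn2 : 2 ≤ n) (hr : 2 ≤ r)
    (hG : G.Connected) (hreg : ∀ v : V, deg G v = r) :
    (phi G : ℝ) ≤ (n : ℝ) / (r - 1) :=
  stmt12_general G n r hn hn2 hr hreg
end
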